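/- For a > 0, z > 0, T > 0, ω₀ ∈ ℝ, v ≠ 0, the convolution √(a/(2πz)) ∫_ℝ exp(-a(t-s-z/v)²/(2z)) · exp(-s²/(2T²)) · cos(ω₀ s) ds equals (1+z/(aT²))^{-1/2} · exp(-[(a/z)(t-z/v)² + ω₀²T²]/(2(1+aT²/z))) · cos(ω₀(t-z/v)/(1+z/(aT²))). -/

import Mathlib

open Real Complex MeasureTheory in
theorem stmt_7 (a z T ω₀ v t : ℝ) (ha : 0 < a) (hz : 0 < z) (hT : 0 < T) (hv : v ≠ 0) :
    Real.sqrt (a / (2 * π * z)) *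
        ∫ s : ℝ, Real.exp (-a * (t - s - z / v) ^ 2 / (2 * z)) *
          Real.exp (-s ^ 2 / (2 * T ^ 2)) * Real.cos (ω₀ * s)
      = (1 / Real.sqrt (1 + z / (a * T ^ 2))) *
          Real.exp (-((a / z) * (t - z / v) ^ 2 + ω₀ ^ 2 * T ^ 2) /
            (2 * (1 + a * T ^ 2 / z))) *
          Real.cos (ω₀ * (t - z / v) / (1 + z / (a * T ^ 2))) := by
  obtain ⟨t₀, ht₀⟩ : ∃ t₀ : ℝ, t₀ = t - z / v := ⟨_, rfl⟩
  have hts : ∀ s : ℝ, t - s - z / v = t₀ - s := fun s => by rw [ht₀]; ring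
  rw [← ht₀]
  simp_rw [hts]
  clear ht₀ hts hv
  have hb' : (0:ℝ) < a / (2 * z) + 1 / (2 * T ^ 2) := by positivity
  set b : ℂ := ((-(a / (2 * z) + 1 / (2 * T ^ 2)) : ℝ) : ℂ) with hb
  set c : ℂ := ((a * t₀ / z : ℝ) : ℂ) + (ω₀ : ℂ) * Complex.I with hc
  set d : ℂ := ((-(a * t₀ ^ 2) / (2 * z) : ℝ) : ℂ) with hd
  have hbre : b.re < 0 := by
    simp only [hb, Complex.ofReal_re]; linarith
  -- pointwise identity
  have key : ∀ s : ℝ,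
      Real.exp (-a * (t₀ - s) ^ 2 / (2 * z)) *
        Real.exp (-s ^ 2 / (2 * T ^ 2)) * Real.cos (ω₀ * s)
      = (Complex.exp (b * (s : ℂ) ^ 2 + c * s + d)).re := by
    intro s
    have h1 : b * (s : ℂ) ^ 2 + c * s + d
        = ((-(a / (2 * z) + 1 / (2 * T ^ 2)) * s ^ 2 + (a * t₀ / z) * s
            + -(a * t₀ ^ 2) / (2 * z) : ℝ) : ℂ) + ((ω₀ * s : ℝ) : ℂ) * Complex.I := by
      rw [hb, hc, hd]; push_cast; ring
    rw [h1, Complex.exp_re]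
    simp only [Complex.add_re, Complex.add_im, Complex.ofReal_re, Complex.ofReal_im,
      Complex.mul_re, Complex.mul_im, Complex.I_re, Complex.I_im]
    rw [← Real.exp_add]
    congr 1
    · congr 1
      field_simp
      ring
    · ring
  simp_rw [key]
  have hint := integrable_cexp_quadratic' hbre c d
  have hre := integral_re (μ := (volume : Measure ℝ)) (𝕜 := ℂ) hint
  simp only [RCLike.re_eq_complex_re] at hre
  rw [hre, integral_cexp_quadratic hbre c d]
  -- evaluate the constant
  have hπb : (↑π / -b) = ((π / (a / (2 * z) + 1 / (2 * T ^ 2)) : ℝ) : ℂ) := by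
    rw [hb]; push_cast; ring
  have hpos : (0:ℝ) < π / (a / (2 * z) + 1 / (2 * T ^ 2)) := by positivity
  have hpow : (↑π / -b) ^ (1 / 2 : ℂ)
      = ((Real.sqrt (π / (a / (2 * z) + 1 / (2 * T ^ 2))) : ℝ) : ℂ) := by
    rw [hπb, show ((1/2 : ℂ)) = ((1/2 : ℝ) : ℂ) by norm_num,
      ← Complex.ofReal_cpow hpos.le, ← Real.rpow_natCast]
    norm_num [Real.sqrt_eq_rpow]
  have haz : a ≠ 0 := ha.ne'
  have hzz : z ≠ 0 := hz.ne'
  have hTT : T ≠ 0 := hT.ne'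
  have hsum : a / (2 * z) + 1 / (2 * T ^ 2) ≠ 0 := hb'.ne'
  have h1 : (0:ℝ) < 1 + a * T ^ 2 / z := by positivity
  have h2 : (0:ℝ) < 1 + z / (a * T ^ 2) := by positivity
  set X : ℝ := -((a / z) * t₀ ^ 2 + ω₀ ^ 2 * T ^ 2) / (2 * (1 + a * T ^ 2 / z)) with hX
  set Y : ℝ := ω₀ * t₀ / (1 + z / (a * T ^ 2)) with hY
  have hc2 : c ^ 2 = (((a * t₀ / z) ^ 2 - ω₀ ^ 2 : ℝ) : ℂ)
      + ((2 * (a * t₀ / z) * ω₀ : ℝ) : ℂ) * Complex.I := by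
    rw [hc]
    push_cast
    ring_nf
    rw [Complex.I_sq]
    ring
  have hXr : -(a * t₀ ^ 2) / (2 * z)
      - ((a * t₀ / z) ^ 2 - ω₀ ^ 2) / (4 * (-(a / (2 * z) + 1 / (2 * T ^ 2)))) = X := by
    rw [hX, mul_neg, div_neg]
    field_simp
    ring
  have hYr : -(2 * (a * t₀ / z) * ω₀ / (4 * (-(a / (2 * z) + 1 / (2 * T ^ 2))))) = Y := by
    rw [hY, mul_neg, div_neg]
    field_simp
    ring
  have hw : d - c ^ 2 / (4 * b) = (X : ℂ) + (Y : ℂ) * Complex.I := by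
    rw [hd, hc2, hb, ← hXr, ← hYr]
    have : ((-(a / (2 * z) + 1 / (2 * T ^ 2)) : ℝ) : ℂ) ≠ 0 := by
      exact_mod_cast neg_ne_zero.mpr hsum
    push_cast
    ring
  rw [hw, hpow]
  have hexpre : (((Real.sqrt (π / (a / (2 * z) + 1 / (2 * T ^ 2))) : ℝ) : ℂ) *
      Complex.exp ((X : ℂ) + (Y : ℂ) * Complex.I)).re
      = Real.sqrt (π / (a / (2 * z) + 1 / (2 * T ^ 2))) * (Real.exp X * Real.cos Y) := by
    simp [Complex.mul_re, Complex.exp_re, Complex.exp_im]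
  rw [hexpre]
  have hQ : a / (2 * π * z) * (π / (a / (2 * z) + 1 / (2 * T ^ 2)))
      = (1 + z / (a * T ^ 2))⁻¹ := by
    apply eq_inv_of_mul_eq_one_left
    have hπ : (0:ℝ) < π := Real.pi_pos
    field_simp
  have hsq : Real.sqrt (a / (2 * π * z)) * Real.sqrt (π / (a / (2 * z) + 1 / (2 * T ^ 2)))
      = 1 / Real.sqrt (1 + z / (a * T ^ 2)) := by
    rw [← Real.sqrt_mul (by positivity), hQ, one_div, ← Real.sqrt_inv]
  calc Real.sqrt (a / (2 * π * z)) *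
        (Real.sqrt (π / (a / (2 * z) + 1 / (2 * T ^ 2))) * (Real.exp X * Real.cos Y))
      = (Real.sqrt (a / (2 * π * z)) * Real.sqrt (π / (a / (2 * z) + 1 / (2 * T ^ 2))))
          * Real.exp X * Real.cos Y := by ring
    _ = _ := by rw [hsq, hX, hY]
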